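/- arXiv:2111.02183 — 6 statements merged into one kernel-verified Lean document; each statement's English description precedes it below -/
import Mathlib

section
/- Let k ≥ 1, let p₁,…,p_k be distinct primes and n = p₁⋯p_k, and let v be a positive divisor of n. Then the degree of v in the k-dprime divisor function graph Γ_k equals 2^k − 1 if v = 1 or v = n, and equals 2^{ω(v)} + 2^{k−ω(v)} − 2 otherwise, where ω(v) denotes the number of distinct prime divisors of v. -/
/-- The `k`-dprime divisor function graph on the positive divisors of `n`:
two distinct divisors `u`, `v` are adjacent iff `u ∣ v` or `v ∣ u`. -/
def divisorGraph (n : ℕ) : SimpleGraph {d : ℕ // d ∈ n.divisors} where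
  Adj u v := u ≠ v ∧ ((u : ℕ) ∣ (v : ℕ) ∨ (v : ℕ) ∣ (u : ℕ))
  symm := ⟨fun _ _ ⟨h, hd⟩ => ⟨h.symm, hd.symm⟩⟩
  loopless := ⟨fun _ ⟨h, _⟩ => h rfl⟩

instance (n : ℕ) : DecidableRel (divisorGraph n).Adj :=
  fun _ _ => instDecidableAnd

/-!
The neighbours of `v` are its proper divisors together with its proper multiples in `n`; the
multiples are `v * e` for `e ∣ n / v`, and the two sets share only `v`, so
`deg v = d(v) + d(n / v) - 2` for any `n`. When `n` is squarefree with `k` prime factors,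
`d(m) = 2 ^ ω(m)` for every divisor `m`, and `ω(v) + ω(n / v) = k`.
-/

open Finset

namespace Nat

variable {ι : Type*} {s : Finset ι} {p : ι → ℕ}

lemma squarefree_prod_of_prime_of_injOn (hp : ∀ i ∈ s, (p i).Prime) (hinj : Set.InjOn p s) :
    Squarefree (∏ i ∈ s, p i) := by
  refine squarefree_prod_of_pairwise_isCoprime (fun i hi j hj hij ↦ ?_)
    fun i hi ↦ (hp i hi).prime.squarefree
  rw [Function.onFun, ← coprime_iff_isRelPrime]
  exact (coprime_primes (hp i hi) (hp j hj)).mpr (hinj.ne hi hj hij)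

lemma card_primeFactors_prod_of_prime_of_injOn (hp : ∀ i ∈ s, (p i).Prime)
    (hinj : Set.InjOn p s) : #(∏ i ∈ s, p i).primeFactors = #s := by
  rw [← Finset.prod_image (f := fun q ↦ q) hinj, primeFactors_prod (by simpa using hp),
    Finset.card_image_of_injOn hinj]

lemma card_divisors_of_squarefree {m : ℕ} (hm : Squarefree m) :
    #m.divisors = 2 ^ #m.primeFactors := by
  rw [card_divisors hm.ne_zero, prod_congr rfl fun q hq ↦ ?_, prod_const]
  rw [factorization_eq_one_of_squarefree hm (prime_of_mem_primeFactors hq)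
    (dvd_of_mem_primeFactors hq)]

lemma card_primeFactors_add_card_primeFactors_div {n v : ℕ} (hn : Squarefree n) (hv : v ∣ n) :
    #v.primeFactors + #(n / v).primeFactors = #n.primeFactors := by
  have hvw : v * (n / v) = n := Nat.mul_div_cancel' hv
  have hcop : v.Coprime (n / v) := coprime_of_squarefree_mul (by rwa [hvw])
  rw [← card_union_of_disjoint hcop.disjoint_primeFactors, ← hcop.primeFactors_mul, hvw]

lemma card_divisors_filter_dvd {n v : ℕ} (hn : n ≠ 0) (hv : v ∣ n) :
    #{u ∈ n.divisors | v ∣ u} = #(n / v).divisors := by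
  have hv0 : v ≠ 0 := ne_zero_of_dvd_ne_zero hn hv
  have himage : {u ∈ n.divisors | v ∣ u} = (n / v).divisors.image (v * ·) := by
    ext u
    simp only [mem_filter, mem_image, mem_divisors, Nat.div_ne_zero_iff_of_dvd hv, ne_eq, hn, hv0,
      not_false_eq_true, and_true]
    constructor
    · rintro ⟨hun, e, rfl⟩
      exact ⟨e, Nat.dvd_div_of_mul_dvd hun, rfl⟩
    · rintro ⟨e, hen, rfl⟩
      exact ⟨Nat.mul_dvd_of_dvd_div hv hen, dvd_mul_right v e⟩
  rw [himage, Finset.card_image_of_injective _ (mul_right_injective₀ hv0)]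

end Nat

open Nat

theorem divisorGraph_degree {n v : ℕ} (hv : v ∈ n.divisors) :
    (divisorGraph n).degree ⟨v, hv⟩ = #v.divisors + #(n / v).divisors - 2 := by
  obtain ⟨hvn, hn0⟩ := mem_divisors.mp hv
  have hv0 : v ≠ 0 := ne_zero_of_dvd_ne_zero hn0 hvn
  have hneighbors : ((divisorGraph n).neighborFinset ⟨v, hv⟩).map (Function.Embedding.subtype _) =
      (v.divisors.erase v) ∪ ({u ∈ n.divisors | v ∣ u}.erase v) := by
    ext u
    simp only [mem_map, SimpleGraph.mem_neighborFinset, Function.Embedding.coe_subtype,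
      mem_union, mem_erase, mem_filter, mem_divisors]
    constructor
    · rintro ⟨⟨u, hu⟩, ⟨hne, hdvd⟩, rfl⟩
      have hne' : u ≠ v := fun h ↦ hne (Subtype.ext h.symm)
      rcases hdvd with hvu | huv
      · exact Or.inr ⟨hne', mem_divisors.mp hu, hvu⟩
      · exact Or.inl ⟨hne', huv, hv0⟩
    · rintro (⟨hne, huv, -⟩ | ⟨hne, hu, hvu⟩)
      · exact ⟨⟨u, mem_divisors.mpr ⟨huv.trans hvn, hn0⟩⟩,
          ⟨fun h ↦ hne (congrArg Subtype.val h).symm, Or.inr huv⟩, rfl⟩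
      · exact ⟨⟨u, mem_divisors.mpr hu⟩,
          ⟨fun h ↦ hne (congrArg Subtype.val h).symm, Or.inl hvu⟩, rfl⟩
  have hdisj : Disjoint (v.divisors.erase v) ({u ∈ n.divisors | v ∣ u}.erase v) := by
    simp only [disjoint_left, mem_erase, mem_filter, mem_divisors]
    rintro u ⟨huv, hu, -⟩ ⟨-, -, hvu⟩
    exact huv (dvd_antisymm hu hvu)
  have hv_mem_divisors : v ∈ v.divisors := mem_divisors_self v hv0
  have hv_mem_multiples : v ∈ {u ∈ n.divisors | v ∣ u} := mem_filter.mpr ⟨hv, dvd_rfl⟩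
  have := card_pos.mpr ⟨v, hv_mem_divisors⟩
  have := card_pos.mpr ⟨v, hv_mem_multiples⟩
  rw [← SimpleGraph.card_neighborFinset_eq_degree, ← card_map, hneighbors,
    card_union_of_disjoint hdisj, card_erase_of_mem hv_mem_divisors,
    card_erase_of_mem hv_mem_multiples, ← card_divisors_filter_dvd hn0 hvn]
  omega

theorem stmt_1_general (k : ℕ) (p : Fin k → ℕ) (hp : ∀ i, (p i).Prime)
    (hinj : Function.Injective p) (n : ℕ) (hn : n = ∏ i, p i)
    (v : ℕ) (hv : v ∈ n.divisors) :
    (divisorGraph n).degree ⟨v, hv⟩ =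
      if v = 1 ∨ v = n then 2 ^ k - 1
      else 2 ^ v.primeFactors.card + 2 ^ (k - v.primeFactors.card) - 2 := by
  have hsf : Squarefree n := hn ▸ squarefree_prod_of_prime_of_injOn (fun i _ ↦ hp i) hinj.injOn
  have hω : #n.primeFactors = k := by
    rw [hn, card_primeFactors_prod_of_prime_of_injOn (fun i _ ↦ hp i) hinj.injOn, Finset.card_univ,
      Fintype.card_fin]
  have hvn := dvd_of_mem_divisors hv
  have hω_div : #(n / v).primeFactors = k - #v.primeFactors := by
    have := card_primeFactors_add_card_primeFactors_div hsf hvn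
    omega
  rw [divisorGraph_degree, card_divisors_of_squarefree (hsf.squarefree_of_dvd hvn),
    card_divisors_of_squarefree (hsf.squarefree_of_dvd (div_dvd_of_dvd hvn)), hω_div]
  split_ifs with hv_trivial
  · have := Nat.one_le_two_pow (n := k)
    rcases hv_trivial with rfl | rfl
    · rw [primeFactors_one, card_empty, pow_zero, Nat.sub_zero]
      omega
    · rw [hω, Nat.sub_self, pow_zero]
      omega
  · rfl

theorem stmt_1 (k : ℕ) (hk : 1 ≤ k) (p : Fin k → ℕ) (hp : ∀ i, (p i).Prime)
    (hinj : Function.Injective p) (n : ℕ) (hn : n = ∏ i, p i)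
    (v : ℕ) (hv : v ∈ n.divisors) :
    (divisorGraph n).degree ⟨v, hv⟩ =
      if v = 1 ∨ v = n then 2 ^ k - 1
      else 2 ^ v.primeFactors.card + 2 ^ (k - v.primeFactors.card) - 2 :=
  stmt_1_general k p hp hinj n hn v hv
end

section
/- Let k ≥ 1, let p₁,…,p_k be distinct primes, let n = p₁⋯p_k and n' = p₁⋯p_{k−1}. Then the number of edges of the k-dprime divisor function graph Γ_k on the divisors of n equals the number of edges of the (k−1)-dprime divisor function graph Γ_{k−1} on the divisors of n' plus the sum, over all positive divisors v of n', of (deg_{Γ_{k−1}}(v) + 1). -/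
/-!
Every edge of `Γ_k` joins a divisor `v` of `n` to one of its proper divisors, so `Γ_k` has
`E(n) = ∑_{v ∣ n} #properDivisors(v)` edges. Writing `n = p m` with `p = p_k ∤ m = n'`, the
divisors of `n` are the `d` and `p d` with `d ∣ m`, and `p d` has `2 #properDivisors(d) + 1` proper
divisors; hence `E(p m) = 3 E(m) + τ(m)`. The handshake lemma turns the right-hand side into the
same quantity: `E(m) + ∑_v (deg v + 1) = E(m) + 2 E(m) + τ(m)`.
-/

open Finset

theorem SimpleGraph.sum_degree_add_one {V : Type*} [Fintype V]
    (G : SimpleGraph V) [DecidableRel G.Adj] :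
    ∑ v, (G.degree v + 1) = 2 * #G.edgeFinset + Fintype.card V := by
  rw [sum_add_distrib, sum_degrees_eq_twice_card_edges, sum_const, smul_eq_mul, mul_one,
    card_univ]

namespace Nat

theorem Coprime.sum_divisors_mul_eq_sum_product {M : Type*} [AddCommMonoid M] {m n : ℕ}
    (hmn : m.Coprime n) (f : ℕ → M) :
    ∑ d ∈ (m * n).divisors, f d = ∑ x ∈ m.divisors ×ˢ n.divisors, f (x.1 * x.2) := by
  rw [Nat.divisors_mul, Finset.mul_def, sum_image hmn.mul_injOn_divisors]

theorem Prime.sum_divisors_mul_of_not_dvd {M : Type*} [AddCommMonoid M] {p m : ℕ} (hp : p.Prime)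
    (hpm : ¬ p ∣ m) (f : ℕ → M) :
    ∑ d ∈ (p * m).divisors, f d = ∑ d ∈ m.divisors, (f d + f (p * d)) := by
  rw [((coprime_iff_not_dvd hp).mpr hpm).sum_divisors_mul_eq_sum_product, sum_product,
    hp.divisors, sum_pair hp.one_lt.ne, ← sum_add_distrib]
  simp only [one_mul]

theorem card_divisors_eq_card_properDivisors_add_one {n : ℕ} (hn : n ≠ 0) :
    #n.divisors = #n.properDivisors + 1 := by
  rw [← insert_self_properDivisors hn, card_insert_of_notMem self_notMem_properDivisors]

theorem Prime.card_properDivisors_mul_of_not_dvd {p d : ℕ} (hp : p.Prime) (hpd : ¬ p ∣ d)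
    (hd : d ≠ 0) : #(p * d).properDivisors = 2 * #d.properDivisors + 1 := by
  have hpd0 : p * d ≠ 0 := mul_ne_zero hp.ne_zero hd
  have hmul := ((coprime_iff_not_dvd hp).mpr hpd).card_divisors_mul
  rw [card_divisors_eq_card_properDivisors_add_one hpd0,
    card_divisors_eq_card_properDivisors_add_one hd, hp.divisors,
    card_pair hp.one_lt.ne] at hmul
  omega

theorem Prime.not_dvd_prod_of_injective {ι κ : Type*} [Fintype κ] {p : ι → ℕ}
    (hp : ∀ i, (p i).Prime) (hinj : Function.Injective p) {j : ι} (g : κ → ι)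
    (hg : ∀ i, g i ≠ j) : ¬ p j ∣ ∏ i, p (g i) := by
  rw [(hp j).prime.dvd_finsetProd_iff]
  rintro ⟨i, -, hdvd⟩
  exact hg i (hinj ((prime_dvd_prime_iff_eq (hp j) (hp (g i))).mp hdvd)).symm

end Nat

theorem card_edgeFinset_divisorGraph (m : ℕ) :
    #(divisorGraph m).edgeFinset = ∑ v ∈ m.divisors, #v.properDivisors := by
  have mem_of_mem_sigma {x : Σ _ : ℕ, ℕ} (hx : x ∈ m.divisors.sigma (·.properDivisors)) :
      x.1 ∈ m.divisors ∧ x.2 ∈ m.divisors := by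
    obtain ⟨h1, h2⟩ := mem_sigma.mp hx
    exact ⟨h1, Nat.divisors_subset_of_dvd (Nat.mem_divisors.mp h1).2 (Nat.dvd_of_mem_divisors h1)
      (Nat.properDivisors_subset_divisors h2)⟩
  rw [← card_sigma]
  refine (card_bij (fun x hx => s(⟨x.2, (mem_of_mem_sigma hx).2⟩, ⟨x.1, (mem_of_mem_sigma hx).1⟩))
    ?_ ?_ ?_).symm
  · intro x hx
    have hlt := Nat.mem_properDivisors.mp (mem_sigma.mp hx).2
    rw [SimpleGraph.mem_edgeFinset, SimpleGraph.mem_edgeSet]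
    exact ⟨fun h => hlt.2.ne (congrArg Subtype.val h), Or.inl hlt.1⟩
  · intro x hx y hy hxy
    have hx' := (Nat.mem_properDivisors.mp (mem_sigma.mp hx).2).2
    have hy' := (Nat.mem_properDivisors.mp (mem_sigma.mp hy).2).2
    rcases Sym2.eq_iff.mp hxy with ⟨hsnd, hfst⟩ | ⟨hsnd, hfst⟩
    · exact Sigma.ext (congrArg Subtype.val hfst) (heq_of_eq (congrArg Subtype.val hsnd))
    · have : x.2 = y.1 := congrArg Subtype.val hsnd
      have : x.1 = y.2 := congrArg Subtype.val hfst
      omega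
  · have mem_sigma_of_dvd {a b : {d // d ∈ m.divisors}} (hne : a ≠ b) (hab : (a : ℕ) ∣ b) :
        (⟨b, a⟩ : Σ _ : ℕ, ℕ) ∈ m.divisors.sigma (·.properDivisors) :=
      mem_sigma.mpr ⟨b.2, Nat.mem_properDivisors.mpr ⟨hab, lt_of_le_of_ne
        (Nat.le_of_dvd (Nat.pos_of_mem_divisors b.2) hab) fun h => hne (Subtype.ext h)⟩⟩
    intro e he
    induction e with
    | _ u v =>
      obtain ⟨hne, huv | hvu⟩ := ((divisorGraph m).mem_edgeSet).mp (SimpleGraph.mem_edgeFinset.mp he)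
      · exact ⟨_, mem_sigma_of_dvd hne huv, rfl⟩
      · exact ⟨_, mem_sigma_of_dvd hne.symm hvu, Sym2.eq_swap⟩

theorem card_edgeFinset_divisorGraph_prime_mul {p m : ℕ} (hp : p.Prime) (hpm : ¬ p ∣ m) :
    #(divisorGraph (p * m)).edgeFinset = 3 * #(divisorGraph m).edgeFinset + #m.divisors := by
  rw [card_edgeFinset_divisorGraph, card_edgeFinset_divisorGraph,
    hp.sum_divisors_mul_of_not_dvd hpm, mul_sum, card_eq_sum_ones, ← sum_add_distrib]
  refine sum_congr rfl fun d hd => ?_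
  rw [hp.card_properDivisors_mul_of_not_dvd (fun h => hpm (h.trans (Nat.dvd_of_mem_divisors hd)))
    (Nat.pos_of_mem_divisors hd).ne']
  ring

theorem stmt_2 (k : ℕ) (hk : 1 ≤ k) (p : Fin k → ℕ) (hp : ∀ i, (p i).Prime)
    (hinj : Function.Injective p) (n n' : ℕ) (hn : n = ∏ i, p i)
    (hn' : n' = ∏ i : Fin (k - 1), p (Fin.castLE (Nat.sub_le k 1) i)) :
    (divisorGraph n).edgeFinset.card =
      (divisorGraph n').edgeFinset.card +
        ∑ v : {d : ℕ // d ∈ n'.divisors}, ((divisorGraph n').degree v + 1) := by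
  obtain ⟨m, rfl⟩ : ∃ m, k = m + 1 := ⟨k - 1, by omega⟩
  have hfactor : n = p (Fin.last m) * n' := by
    rw [hn, hn', Fin.prod_univ_castSucc, mul_comm]
    rfl
  have hndvd : ¬ p (Fin.last m) ∣ n' := hn' ▸
    Nat.Prime.not_dvd_prod_of_injective hp hinj _ fun i => Fin.ne_of_val_ne i.isLt.ne
  rw [hfactor, card_edgeFinset_divisorGraph_prime_mul (hp _) hndvd,
    SimpleGraph.sum_degree_add_one, Fintype.card_coe]
  ring
end

section
/- Let k ≥ 1, let p₁,…,p_k be distinct primes, let n = p₁⋯p_k and n' = p₁⋯p_{k−1}. Then the number of edges of the k-dprime divisor function graph Γ_k on the divisors of n equals the number of edges of the (k−1)-dprime divisor function graph Γ_{k−1} on the divisors of n' plus 2·3^{k−1} − 2^{k−1}. -/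
open Finset ArithmeticFunction
open scoped ArithmeticFunction.sigma ArithmeticFunction.zeta

namespace SimpleGraph

variable {V : Type*} [Fintype V] [DecidableEq V] (G : SimpleGraph V) [DecidableRel G.Adj]
  (r : V → V → Prop) [DecidableRel r]

lemma card_edgeFinset_eq_card_strict_of_adj_iff (hanti : ∀ u v, r u v → r v u → u = v)
    (hadj : ∀ u v, G.Adj u v ↔ u ≠ v ∧ (r u v ∨ r v u)) :
    #G.edgeFinset = #{z : V × V | r z.1 z.2 ∧ z.1 ≠ z.2} := by
  symm
  refine card_nbij (fun z => s(z.1, z.2)) ?_ ?_ ?_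
  · rintro ⟨u, v⟩ huv
    simp only [coe_filter, mem_univ, true_and, Set.mem_ofPred_eq, mem_coe, mem_edgeFinset,
      mem_edgeSet] at huv ⊢
    exact (hadj u v).2 ⟨huv.2, Or.inl huv.1⟩
  · rintro ⟨a, b⟩ hab ⟨c, d⟩ hcd h
    simp only [coe_filter, mem_univ, true_and, Set.mem_ofPred_eq] at hab hcd
    rcases Sym2.eq_iff.1 h with ⟨rfl, rfl⟩ | ⟨rfl, rfl⟩
    · rfl
    · exact absurd (hanti a b hab.1 hcd.1) hab.2
  · intro e he
    induction e using Sym2.ind with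
    | _ u v =>
    simp only [coe_filter, mem_univ, true_and, mem_coe, mem_edgeFinset, mem_edgeSet,
      Set.mem_image, Set.mem_ofPred_eq, Prod.exists] at he ⊢
    obtain ⟨huv, h | h⟩ := (hadj u v).1 he
    · exact ⟨u, v, ⟨h, huv⟩, rfl⟩
    · exact ⟨v, u, ⟨h, huv.symm⟩, Sym2.eq_swap⟩

lemma card_edgeFinset_add_card_eq_card_rel (hrefl : ∀ u, r u u)
    (hanti : ∀ u v, r u v → r v u → u = v)
    (hadj : ∀ u v, G.Adj u v ↔ u ≠ v ∧ (r u v ∨ r v u)) :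
    #G.edgeFinset + Fintype.card V = #{z : V × V | r z.1 z.2} := by
  have hdiag : #{z : V × V | r z.1 z.2 ∧ z.1 = z.2} = Fintype.card V := by
    rw [← card_univ]
    refine card_nbij' Prod.fst (fun v => (v, v)) ?_ ?_ ?_ ?_ <;>
      simp +contextual [Set.LeftInvOn, Set.RightInvOn, Set.MapsTo, hrefl, Prod.ext_iff]
  rw [card_edgeFinset_eq_card_strict_of_adj_iff G r hanti hadj, ← hdiag, add_comm,
    ← filter_filter, ← filter_filter, card_filter_add_card_filter_not]

end SimpleGraph

lemma ArithmeticFunction.IsMultiplicative.map_prod_primes {R : Type*} [CommMonoidWithZero R]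
    {f : ArithmeticFunction R} (hf : f.IsMultiplicative) {ι : Type*} [Fintype ι] {q : ι → ℕ}
    (hq : ∀ i, (q i).Prime) (hinj : Function.Injective q) :
    f (∏ i, q i) = ∏ i, f (q i) :=
  hf.map_prod q univ fun i _ j _ hij => (Nat.coprime_primes (hq i) (hq j)).2 (hinj.ne hij)

lemma sigma_zero_apply_prime {p : ℕ} (hp : p.Prime) : σ 0 p = 2 := by
  simpa using sigma_zero_apply_prime_pow (i := 1) hp

lemma zeta_mul_sigma_zero_apply_prime {p : ℕ} (hp : p.Prime) : (ζ * σ 0) p = 3 := by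
  rw [zeta_mul_apply, hp.sum_divisors, sigma_zero_apply_prime hp, sigma_zero_apply,
    Nat.divisors_one, card_singleton]

lemma card_divisors_filter_dvd {n : ℕ} (v : {d : ℕ // d ∈ n.divisors}) :
    #{u : {d : ℕ // d ∈ n.divisors} | (u : ℕ) ∣ v} = #(v : ℕ).divisors := by
  obtain ⟨hvn, hn⟩ := Nat.mem_divisors.1 v.2
  rw [← card_map (Function.Embedding.subtype _)]
  congr 1
  ext d
  simp only [mem_map, mem_filter, mem_univ, true_and, Function.Embedding.coe_subtype,
    Subtype.exists, Nat.mem_divisors, exists_and_right, exists_eq_right]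
  exact ⟨fun ⟨⟨_, _⟩, hdv⟩ => ⟨hdv, (Nat.pos_of_mem_divisors v.2).ne'⟩,
    fun ⟨hdv, _⟩ => ⟨⟨hdv.trans hvn, hn⟩, hdv⟩⟩

lemma card_dvd_pairs_divisors (n : ℕ) :
    #{z : {d : ℕ // d ∈ n.divisors} × {d : ℕ // d ∈ n.divisors} | (z.1 : ℕ) ∣ z.2} =
      ∑ d ∈ n.divisors, #d.divisors := by
  rw [card_filter, Fintype.sum_prod_type_right, ← sum_coe_sort n.divisors]
  refine sum_congr rfl fun v _ => ?_
  rw [← card_divisors_filter_dvd, card_filter]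

lemma card_edgeFinset_divisorGraph_add_card_divisors (n : ℕ) :
    #(divisorGraph n).edgeFinset + #n.divisors = ∑ d ∈ n.divisors, #d.divisors := by
  rw [← Fintype.card_coe n.divisors, ← card_dvd_pairs_divisors]
  exact (divisorGraph n).card_edgeFinset_add_card_eq_card_rel (fun u v => (u : ℕ) ∣ v)
    (fun _ => dvd_rfl) (fun _ _ huv hvu => Subtype.ext (Nat.dvd_antisymm huv hvu))
    (fun _ _ => Iff.rfl)

lemma card_edgeFinset_divisorGraph_prod_primes {ι : Type*} [Fintype ι] {q : ι → ℕ}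
    (hq : ∀ i, (q i).Prime) (hinj : Function.Injective q) :
    #(divisorGraph (∏ i, q i)).edgeFinset = 3 ^ Fintype.card ι - 2 ^ Fintype.card ι := by
  have hcount := card_edgeFinset_divisorGraph_add_card_divisors (∏ i, q i)
  have hdivisors : #(∏ i, q i).divisors = 2 ^ Fintype.card ι := by
    rw [← sigma_zero_apply, isMultiplicative_sigma.map_prod_primes hq hinj,
      prod_congr rfl fun i _ => sigma_zero_apply_prime (hq i), prod_const, card_univ]
  have hpairs : ∑ d ∈ (∏ i, q i).divisors, #d.divisors = 3 ^ Fintype.card ι := by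
    simp only [← sigma_zero_apply, ← zeta_mul_apply]
    rw [(isMultiplicative_zeta.mul isMultiplicative_sigma).map_prod_primes hq hinj,
      prod_congr rfl fun i _ => zeta_mul_sigma_zero_apply_prime (hq i), prod_const, card_univ]
  omega

theorem stmt_3 (k : ℕ) (hk : 1 ≤ k) (p : Fin k → ℕ) (hp : ∀ i, (p i).Prime)
    (hinj : Function.Injective p) (n n' : ℕ) (hn : n = ∏ i, p i)
    (hn' : n' = ∏ i : Fin (k - 1), p (Fin.castLE (Nat.sub_le k 1) i)) :
    (divisorGraph n).edgeFinset.card =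
      (divisorGraph n').edgeFinset.card + (2 * 3 ^ (k - 1) - 2 ^ (k - 1)) := by
  subst hn hn'
  rw [card_edgeFinset_divisorGraph_prod_primes hp hinj,
    card_edgeFinset_divisorGraph_prod_primes (fun _ => hp _) (hinj.comp (Fin.castLE_injective _)),
    Fintype.card_fin, Fintype.card_fin]
  obtain ⟨j, rfl⟩ := Nat.exists_eq_add_of_le' hk
  have : 2 ^ j ≤ 3 ^ j := Nat.pow_le_pow_left (by norm_num) j
  simp only [Nat.add_sub_cancel, pow_succ]
  omega
end

section
/- Let p, q, r be distinct primes and n = pqr. Then the harmonic index of the 3-dprime divisor function graph Γ₃ equals 589/154. -/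
/-!
For distinct primes `pᵢ`, `s ↦ ∏ i ∈ s, pᵢ` is a bijection from subsets of the index set onto the
divisors of `∏ pᵢ` which turns inclusion into divisibility, so `Γ₃` is isomorphic to the
comparability graph of the subsets of a three-element set. There `∅` and the full set have degree 7
and the six other subsets degree 4; the edges have degree sums 8 (six singleton–pair edges),
11 (twelve edges at `∅` or the full set) and 14 (one edge), so the harmonic index is
`6 · 2/8 + 12 · 2/11 + 2/14 = 589/154`.
-/

namespace SimpleGraph

variable {V W : Type*} [Fintype V] [Fintype W] (G : SimpleGraph V) [DecidableRel G.Adj]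
  {H : SimpleGraph W} [DecidableRel H.Adj]

def harmonicIndex : ℚ :=
  ∑ e ∈ G.edgeFinset,
    Sym2.lift ⟨fun u v => 2 / ((G.degree u : ℚ) + G.degree v), fun u v => by simp only [add_comm]⟩ e

def edgeDegreeSums : Multiset ℕ :=
  G.edgeFinset.val.map (Sym2.lift ⟨fun u v => G.degree u + G.degree v, fun _ _ => add_comm _ _⟩)

theorem harmonicIndex_eq_sum_edgeDegreeSums :
    G.harmonicIndex = (G.edgeDegreeSums.map fun k : ℕ => (2 : ℚ) / k).sum := by
  rw [harmonicIndex, edgeDegreeSums, Multiset.map_map, Finset.sum_eq_multiset_sum]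
  congr 1
  refine Multiset.map_congr rfl fun e _ => ?_
  induction e using Sym2.ind with
  | _ u v => simp

theorem Iso.harmonicIndex_eq (f : G ≃g H) : G.harmonicIndex = H.harmonicIndex := by
  refine Finset.sum_nbij' (Sym2.map f) (Sym2.map f.symm) (fun e he => ?_) (fun e he => ?_)
    (fun e _ => by simp [Sym2.map_map]) (fun e _ => by simp [Sym2.map_map]) (fun e _ => ?_)
  · simpa [f.map_mem_edgeSet_iff] using he
  · simpa [f.symm.map_mem_edgeSet_iff] using he
  · induction e using Sym2.ind with
    | _ u v => simp

end SimpleGraph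

namespace Nat

variable {ι : Type*} {p : ι → ℕ}

theorem exists_subset_prod_eq_of_dvd_prod_primes (hp : ∀ i, (p i).Prime) {s : Finset ι} {d : ℕ}
    (hd : d ∣ ∏ i ∈ s, p i) : ∃ t ⊆ s, ∏ i ∈ t, p i = d := by
  classical
  induction s using Finset.induction_on generalizing d with
  | empty =>
    rw [Finset.prod_empty, dvd_one] at hd
    exact ⟨∅, subset_rfl, hd.symm⟩
  | insert a s ha ih =>
    rw [Finset.prod_insert ha] at hd
    obtain ⟨k, m, hk, hm, rfl⟩ := dvd_mul.mp hd
    obtain ⟨t, hts, rfl⟩ := ih hm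
    rcases (hp a).eq_one_or_self_of_dvd k hk with rfl | rfl
    · exact ⟨t, hts.trans (Finset.subset_insert a s), (one_mul _).symm⟩
    · refine ⟨insert a t, Finset.insert_subset_insert a hts, ?_⟩
      rw [Finset.prod_insert fun hat => ha (hts hat)]

theorem prod_primes_dvd_prod_primes_iff (hp : ∀ i, (p i).Prime) (hinj : p.Injective)
    {s t : Finset ι} : ∏ i ∈ s, p i ∣ ∏ i ∈ t, p i ↔ s ⊆ t := by
  refine ⟨fun h i hi => ?_, Finset.prod_dvd_prod_of_subset s t p⟩
  obtain ⟨j, hj, hij⟩ := ((hp i).prime.dvd_finsetProd_iff p).mp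
    ((Finset.dvd_prod_of_mem p hi).trans h)
  rwa [hinj ((prime_dvd_prime_iff_eq (hp i) (hp j)).mp hij)]

end Nat

section DivisorGraph

variable {ι : Type*} [Fintype ι] {p : ι → ℕ}

noncomputable def Nat.divisorsProdPrimesEquiv (hp : ∀ i, (p i).Prime) (hinj : p.Injective) :
    Finset ι ≃ {d // d ∈ (∏ i, p i).divisors} :=
  Equiv.ofBijective
    (fun s => ⟨∏ i ∈ s, p i, Nat.mem_divisors.mpr
      ⟨Finset.prod_dvd_prod_of_subset _ _ _ s.subset_univ, Finset.prod_ne_zero_iff.mpr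
        fun i _ => (hp i).ne_zero⟩⟩)
    ⟨fun s t hst => subset_antisymm
        ((Nat.prod_primes_dvd_prod_primes_iff hp hinj).mp (congrArg Subtype.val hst).dvd)
        ((Nat.prod_primes_dvd_prod_primes_iff hp hinj).mp (congrArg Subtype.val hst).symm.dvd),
      fun d => by
        obtain ⟨t, -, ht⟩ :=
          Nat.exists_subset_prod_eq_of_dvd_prod_primes hp (Nat.dvd_of_mem_divisors d.2)
        exact ⟨t, Subtype.ext ht⟩⟩

theorem Nat.coe_divisorsProdPrimesEquiv (hp : ∀ i, (p i).Prime) (hinj : p.Injective)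
    (s : Finset ι) : (divisorsProdPrimesEquiv hp hinj s : ℕ) = ∏ i ∈ s, p i :=
  rfl

noncomputable def divisorGraphProdPrimesIso (hp : ∀ i, (p i).Prime) (hinj : p.Injective) :
    SimpleGraph.fromRel ((· ⊆ ·) : Finset ι → Finset ι → Prop) ≃g divisorGraph (∏ i, p i) where
  toEquiv := Nat.divisorsProdPrimesEquiv hp hinj
  map_rel_iff' := by
    simp [divisorGraph, Nat.coe_divisorsProdPrimesEquiv,
      Nat.prod_primes_dvd_prod_primes_iff hp hinj]

end DivisorGraph

theorem edgeDegreeSums_fromRel_subset_fin_three :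
    (SimpleGraph.fromRel ((· ⊆ ·) : Finset (Fin 3) → Finset (Fin 3) → Prop)).edgeDegreeSums =
      Multiset.replicate 6 8 + Multiset.replicate 12 11 + {14} := by
  decide

/-- The harmonic index of `Γ₃`: the sum over all edges of `2 / (deg u + deg v)`. -/
theorem stmt_14 (p q r : ℕ) (hp : p.Prime) (hq : q.Prime) (hr : r.Prime)
    (hpq : p ≠ q) (hpr : p ≠ r) (hqr : q ≠ r) (n : ℕ) (hn : n = p * q * r) :
    ∑ e ∈ (divisorGraph n).edgeFinset,
      Sym2.lift ⟨fun u v =>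
          (2 : ℚ) / (((divisorGraph n).degree u : ℚ) + ((divisorGraph n).degree v : ℚ)),
        fun u v => by beta_reduce; rw [add_comm (((divisorGraph n).degree u : ℚ))]⟩ e =
      589 / 154 := by
  have hprime : ∀ i, (![p, q, r] i).Prime := fun i => by fin_cases i <;> assumption
  have hinj : Function.Injective ![p, q, r] := by
    simp [Function.Injective, Fin.forall_fin_succ, hpq, hpr, hqr, hpq.symm, hpr.symm, hqr.symm]
  obtain rfl : n = ∏ i, ![p, q, r] i := by rw [hn, Fin.prod_univ_three]; rfl
  change (divisorGraph _).harmonicIndex = _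
  rw [← (divisorGraphProdPrimesIso hprime hinj).harmonicIndex_eq,
    SimpleGraph.harmonicIndex_eq_sum_edgeDegreeSums, edgeDegreeSums_fromRel_subset_fin_three]
  norm_num
end

section
/- Let p, q, r be distinct primes and n = pqr. Then the Balaban index of the 3-dprime divisor function graph Γ₃ equals (19/13)·(26 + 6√70)/35, equivalently (19/26)·(52 + 12√70)/35, as a real number. -/
/-!
Sending a set `s ⊆ {0, 1, 2}` to the product of the corresponding primes among `p, q, r`
identifies `Γ₃` with the comparability graph of the Boolean lattice `2^{0,1,2}`, and the Balaban
index is an isomorphism invariant. In the Boolean lattice `∅` is adjacent to every other vertex,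
so distances are `0`, `1` or `2` according as the vertices are equal, comparable or not; this
gives distance sums `7` at `∅` and at the full set and `10` at the six other sets. Of the `19`
edges one joins the two extreme sets, twelve join an extreme to a middle set and six join two
middle sets, and `μ + 1 = 13`, whence `J = (19/13) (1/7 + 12/√70 + 6/10)`.
-/

open SimpleGraph Finset Function

namespace SimpleGraph

variable {V W : Type*} {G : SimpleGraph V} {H : SimpleGraph W}

theorem Hom.edist_map_le (f : G →g H) (u v : V) : H.edist (f u) (f v) ≤ G.edist u v := by
  by_cases hr : G.Reachable u v
  · obtain ⟨w, hw⟩ := hr.exists_walk_length_eq_edist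
    rw [← hw, ← Walk.length_map f]
    exact edist_le _
  · rw [edist_eq_top_of_not_reachable hr]
    exact le_top

theorem Iso.edist_eq (e : G ≃g H) (u v : V) : H.edist (e u) (e v) = G.edist u v :=
  le_antisymm (e.toHom.edist_map_le u v) (by simpa using e.symm.toHom.edist_map_le (e u) (e v))

theorem Iso.dist_eq (e : G ≃g H) (u v : V) : H.dist (e u) (e v) = G.dist u v := by
  rw [dist, dist, e.edist_eq]

theorem dist_eq_ite_of_forall_adj [DecidableEq V] [DecidableRel G.Adj] {c : V}
    (hc : ∀ v, v ≠ c → G.Adj c v) (u v : V) :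
    G.dist u v = if u = v then 0 else if G.Adj u v then 1 else 2 := by
  split_ifs with huv hadj
  · simp [huv]
  · exact dist_eq_one_iff_adj.mpr hadj
  · have hu : u ≠ c := by rintro rfl; exact hadj (hc v (Ne.symm huv))
    have hv : v ≠ c := by rintro rfl; exact hadj (hc u huv).symm
    have hc_common : c ∈ G.commonNeighbors u v :=
      G.mem_commonNeighbors.mpr ⟨(hc u hu).symm, (hc v hv).symm⟩
    rw [dist, edist_eq_two_iff.mpr ⟨huv, hadj, c, hc_common⟩]
    rfl

variable [Fintype V] [Fintype W]

noncomputable def distSum (G : SimpleGraph V) (u : V) : ℝ := ∑ w, (G.dist u w : ℝ)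

theorem Iso.distSum_eq (e : G ≃g H) (u : V) : H.distSum (e u) = G.distSum u := by
  rw [distSum, distSum, ← e.toEquiv.sum_comp]
  exact sum_congr rfl fun w _ => congrArg _ (e.dist_eq u w)

noncomputable def balabanWeight (G : SimpleGraph V) : Sym2 V → ℝ :=
  Sym2.lift ⟨fun u v => 1 / √(G.distSum u * G.distSum v), fun u v => by
    beta_reduce; rw [mul_comm]⟩

theorem Iso.balabanWeight_map (e : G ≃g H) (x : Sym2 V) :
    H.balabanWeight (x.map e) = G.balabanWeight x := by
  induction x using Sym2.ind
  simp [balabanWeight, e.distSum_eq]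

noncomputable def balabanIndex (G : SimpleGraph V) [DecidableRel G.Adj] : ℝ :=
  ((#G.edgeFinset : ℝ) / (((#G.edgeFinset : ℝ) - Fintype.card V + 1) + 1)) *
    ∑ x ∈ G.edgeFinset, G.balabanWeight x

theorem Iso.balabanIndex_eq [DecidableRel G.Adj] [DecidableRel H.Adj] (e : G ≃g H) :
    H.balabanIndex = G.balabanIndex := by
  have hsum : ∑ x ∈ H.edgeFinset, H.balabanWeight x = ∑ x ∈ G.edgeFinset, G.balabanWeight x := by
    refine sum_nbij' (Sym2.map e.symm) (Sym2.map e) ?_ ?_ ?_ ?_ ?_ <;>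
      simp [e.map_mem_edgeSet_iff, e.symm.map_mem_edgeSet_iff, Sym2.map_map,
        e.symm.balabanWeight_map]
  simp only [balabanIndex, hsum, e.card_edgeFinset_eq, Fintype.card_congr e.toEquiv]

end SimpleGraph

variable {ι : Type*} {f : ι → ℕ}

namespace Nat

theorem prod_dvd_prod_iff_subset (hf : Injective f) (hp : ∀ i, (f i).Prime) {s t : Finset ι} :
    ∏ i ∈ s, f i ∣ ∏ i ∈ t, f i ↔ s ⊆ t := by
  refine ⟨fun h => ?_, prod_dvd_prod_of_subset s t f⟩
  have hpf : ∀ u : Finset ι, (∏ i ∈ u, f i).primeFactors = u.map ⟨f, hf⟩ := fun u => by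
    simpa using primeFactors_prod (s := u.map ⟨f, hf⟩) (by simpa using fun i _ => hp i)
  have := primeFactors_mono h (prod_ne_zero_iff.mpr fun i _ => (hp i).ne_zero)
  rwa [hpf, hpf, map_subset_map] at this

theorem prod_injective (hf : Injective f) (hp : ∀ i, (f i).Prime) :
    Injective fun s : Finset ι => ∏ i ∈ s, f i := fun _ _ h =>
  ((prod_dvd_prod_iff_subset hf hp).mp (dvd_of_eq h)).antisymm
    ((prod_dvd_prod_iff_subset hf hp).mp (dvd_of_eq h.symm))

theorem exists_prod_eq_of_dvd_prod [Fintype ι] (hf : Injective f) (hp : ∀ i, (f i).Prime)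
    {d : ℕ} (hd : d ∣ ∏ i, f i) : ∃ s : Finset ι, ∏ i ∈ s, f i = d := by
  refine ⟨univ.filter (f · ∣ d), dvd_antisymm ?_ ?_⟩
  · simpa using Finset.prod_primes_dvd (s := (univ.filter (f · ∣ d)).map ⟨f, hf⟩) d
      (by simpa using fun i _ => (hp i).prime) (by simp)
  · have hcop : Coprime d (∏ i with ¬f i ∣ d, f i) := coprime_prod_right_iff.mpr fun i hi =>
      ((hp i).coprime_iff_not_dvd.mpr (mem_filter.mp hi).2).symm
    rw [← prod_filter_mul_prod_filter_not univ (f · ∣ d)] at hd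
    exact hcop.dvd_of_dvd_mul_right hd

theorem prod_mem_divisors [Fintype ι] (hp : ∀ i, (f i).Prime) {n : ℕ} (hn : ∏ i, f i = n)
    (s : Finset ι) : ∏ i ∈ s, f i ∈ n.divisors := by
  rw [← hn]
  exact mem_divisors.mpr ⟨prod_dvd_prod_of_subset _ _ _ (subset_univ s),
    prod_ne_zero_iff.mpr fun i _ => (hp i).ne_zero⟩

end Nat

abbrev subsetGraph (ι : Type*) : SimpleGraph (Finset ι) := fromRel fun s t => s ⊆ t

noncomputable def finsetEquivDivisors [Fintype ι] (hf : Injective f) (hp : ∀ i, (f i).Prime)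
    {n : ℕ} (hn : ∏ i, f i = n) : Finset ι ≃ {d // d ∈ n.divisors} :=
  Equiv.ofBijective (fun s => ⟨∏ i ∈ s, f i, Nat.prod_mem_divisors hp hn s⟩)
    ⟨fun _ _ h => Nat.prod_injective hf hp (congrArg Subtype.val h), fun d => by
      obtain ⟨s, hs⟩ := Nat.exists_prod_eq_of_dvd_prod hf hp (d := d)
        (by rw [hn]; exact Nat.dvd_of_mem_divisors d.2)
      exact ⟨s, Subtype.ext hs⟩⟩

noncomputable def subsetGraphIsoDivisorGraph [Fintype ι] (hf : Injective f)
    (hp : ∀ i, (f i).Prime) {n : ℕ} (hn : ∏ i, f i = n) : subsetGraph ι ≃g divisorGraph n where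
  toEquiv := finsetEquivDivisors hf hp hn
  map_rel_iff' {s t} := by
    change _ ≠ _ ∧ (∏ i ∈ s, f i ∣ ∏ i ∈ t, f i ∨ ∏ i ∈ t, f i ∣ ∏ i ∈ s, f i) ↔ _
    rw [(finsetEquivDivisors hf hp hn).injective.ne_iff, Nat.prod_dvd_prod_iff_subset hf hp,
      Nat.prod_dvd_prod_iff_subset hf hp, fromRel_adj]

theorem subsetGraph_dist [DecidableEq ι] (s t : Finset ι) :
    (subsetGraph ι).dist s t = if s = t then 0 else if (subsetGraph ι).Adj s t then 1 else 2 :=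
  dist_eq_ite_of_forall_adj (G := subsetGraph ι) (c := ∅)
    (fun t ht => ⟨Ne.symm ht, Or.inl (empty_subset t)⟩) s t

theorem subsetGraph_fin_three_distSum (s : Finset (Fin 3)) :
    (subsetGraph (Fin 3)).distSum s = ((if s = ∅ ∨ s = univ then 7 else 10 : ℕ) : ℝ) := by
  have h : ∀ s : Finset (Fin 3),
      (∑ t, if s = t then 0 else if (subsetGraph (Fin 3)).Adj s t then 1 else 2) =
        if s = ∅ ∨ s = univ then 7 else 10 := by
    decide
  rw [distSum, ← h]
  push_cast [subsetGraph_dist]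
  rfl

theorem subsetGraph_fin_three_balabanIndex :
    (subsetGraph (Fin 3)).balabanIndex = (19 / 13) * ((26 + 6 * √70) / 35) := by
  let w : Finset (Fin 3) → ℕ := fun s => if s = ∅ ∨ s = univ then 7 else 10
  let key : Sym2 (Finset (Fin 3)) → ℕ := Sym2.lift ⟨fun s t => w s * w t, fun _ _ => mul_comm _ _⟩
  have hkey : (subsetGraph (Fin 3)).edgeFinset.val.map key =
      {49} + Multiset.replicate 12 70 + Multiset.replicate 6 100 := by
    decide
  have hE : #(subsetGraph (Fin 3)).edgeFinset = 19 := by decide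
  have hsum : ∑ x ∈ (subsetGraph (Fin 3)).edgeFinset, (subsetGraph (Fin 3)).balabanWeight x =
      (((subsetGraph (Fin 3)).edgeFinset.val.map key).map fun k : ℕ => 1 / √k).sum := by
    rw [Multiset.map_map, sum_eq_multiset_sum]
    congr 1
    refine Multiset.map_congr rfl fun x _ => ?_
    induction x using Sym2.ind
    simp only [balabanWeight, key, w, comp_apply, Sym2.lift_mk, subsetGraph_fin_three_distSum,
      Nat.cast_mul]
  rw [balabanIndex, hsum, hkey, hE]
  simp only [Multiset.map_add, Multiset.sum_add, Multiset.map_singleton, Multiset.sum_singleton,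
    Multiset.map_replicate, Multiset.sum_replicate, Fintype.card_finset, Fintype.card_fin]
  have h70 : √70 * √70 = (70 : ℝ) := Real.mul_self_sqrt (by norm_num)
  norm_num
  field_simp
  linear_combination (-210) * h70

/-- The Balaban index of `Γ₃`: with `m` the number of edges, `N` the number of vertices,
`μ = m − N + 1` the cyclomatic number and `D u = Σ_w d(u,w)`,
`J(G) = (m/(μ+1)) · Σ_{uv ∈ E} (D u · D v)^{−1/2}`. -/
theorem stmt_16 (p q r : ℕ) (hp : p.Prime) (hq : q.Prime) (hr : r.Prime)
    (hpq : p ≠ q) (hpr : p ≠ r) (hqr : q ≠ r) (n : ℕ) (hn : n = p * q * r)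
    (D : {d : ℕ // d ∈ n.divisors} → ℝ)
    (hD : ∀ u, D u = ∑ w : {d : ℕ // d ∈ n.divisors}, ((divisorGraph n).dist u w : ℝ)) :
    (((divisorGraph n).edgeFinset.card : ℝ) /
        ((((divisorGraph n).edgeFinset.card : ℝ) -
            (Fintype.card {d : ℕ // d ∈ n.divisors} : ℝ) + 1) + 1)) *
      ∑ e ∈ (divisorGraph n).edgeFinset,
        Sym2.lift ⟨fun u v => (1 : ℝ) / Real.sqrt (D u * D v),
          fun u v => by beta_reduce; rw [mul_comm (D u)]⟩ e =
      (19 / 13) * ((26 + 6 * Real.sqrt 70) / 35) := by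
  obtain rfl : D = (divisorGraph n).distSum := funext hD
  have hf : Injective ![p, q, r] := by
    intro i j h
    fin_cases i <;> fin_cases j <;> simp at h ⊢ <;> omega
  have hprime : ∀ i, (![p, q, r] i).Prime := by
    intro i
    fin_cases i <;> assumption
  have hprod : ∏ i, ![p, q, r] i = n := by simp [Fin.prod_univ_three, hn]
  exact (subsetGraphIsoDivisorGraph hf hprime hprod).balabanIndex_eq.trans
    subsetGraph_fin_three_balabanIndex
end

section
/- Let p₁, p₂, p₃, p₄ be distinct primes and n = p₁p₂p₃p₄. Then the Randić index of the 4-dprime divisor function graph Γ₄ equals (47 + 60√3 + 12√10 + 8√30)/30, as a real number. -/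
namespace SimpleGraph

variable {V W : Type*} [Fintype V] [Fintype W]

noncomputable def randicIndex (G : SimpleGraph V) [DecidableRel G.Adj] : ℝ :=
  ∑ e ∈ G.edgeFinset,
    Sym2.lift ⟨fun u v => (1 : ℝ) / √((G.degree u : ℝ) * (G.degree v : ℝ)),
      fun u v => by beta_reduce; rw [mul_comm (G.degree u : ℝ)]⟩ e

def edgeDegreeProduct (G : SimpleGraph V) [DecidableRel G.Adj] : Sym2 V → ℕ :=
  Sym2.lift ⟨fun u v => G.degree u * G.degree v, fun _ _ => Nat.mul_comm _ _⟩

theorem randicIndex_eq_sum_edgeDegreeProduct (G : SimpleGraph V) [DecidableRel G.Adj] :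
    G.randicIndex = ∑ e ∈ G.edgeFinset, (√(G.edgeDegreeProduct e : ℝ))⁻¹ := by
  refine Finset.sum_congr rfl fun e _ => ?_
  induction e using Sym2.ind with
  | _ u v => simp [edgeDegreeProduct]

theorem Iso.randicIndex_eq {G : SimpleGraph V} {G' : SimpleGraph W} [DecidableRel G.Adj]
    [DecidableRel G'.Adj] (f : G ≃g G') : G.randicIndex = G'.randicIndex := by
  refine Finset.sum_nbij' (Sym2.map f) (Sym2.map f.symm) ?_ ?_ ?_ ?_ ?_
  · exact fun e he => mem_edgeFinset.2 ((Iso.map_mem_edgeSet_iff f).2 (mem_edgeFinset.1 he))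
  · exact fun e he => mem_edgeFinset.2 ((Iso.map_mem_edgeSet_iff f.symm).2 (mem_edgeFinset.1 he))
  all_goals
    intro e _
    induction e using Sym2.ind with
    | _ u v => simp

def comparability (α : Type*) [PartialOrder α] : SimpleGraph α where
  Adj u v := u ≠ v ∧ (u ≤ v ∨ v ≤ u)
  symm := ⟨fun _ _ ⟨h, hc⟩ => ⟨h.symm, hc.symm⟩⟩
  loopless := ⟨fun _ ⟨h, _⟩ => h rfl⟩

instance (α : Type*) [PartialOrder α] [DecidableEq α] [DecidableLE α] :
    DecidableRel (comparability α).Adj :=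
  fun _ _ => inferInstanceAs (Decidable (_ ∧ _))

end SimpleGraph

open SimpleGraph

section PrimeProducts

variable {ι : Type*} {p : ι → ℕ}

theorem prod_dvd_prod_iff_subset_of_prime (hp : ∀ i, (p i).Prime)
    (hinj : Function.Injective p) {S T : Finset ι} :
    ∏ i ∈ S, p i ∣ ∏ i ∈ T, p i ↔ S ⊆ T := by
  refine ⟨fun h i hi => ?_, Finset.prod_dvd_prod_of_subset S T p⟩
  obtain ⟨j, hj, hij⟩ :=
    ((hp i).prime.dvd_finsetProd_iff p).1 ((Finset.dvd_prod_of_mem p hi).trans h)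
  rwa [hinj ((Nat.prime_dvd_prime_iff_eq (hp i) (hp j)).1 hij)]

theorem eq_prod_filter_of_dvd_prod (hp : ∀ i, (p i).Prime) (hinj : Function.Injective p)
    {S : Finset ι} {d : ℕ} (hd : d ∣ ∏ i ∈ S, p i) : d = ∏ i ∈ S with p i ∣ d, p i := by
  refine Nat.dvd_antisymm ?_ ?_
  · have hcop : d.Coprime (∏ i ∈ S with ¬p i ∣ d, p i) :=
      Nat.Coprime.prod_right fun i hi =>
        ((hp i).coprime_iff_not_dvd.2 (Finset.mem_filter.1 hi).2).symm
    rw [← Finset.prod_filter_mul_prod_filter_not S (fun i => p i ∣ d)] at hd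
    exact hcop.dvd_of_dvd_mul_right hd
  · rw [← Finset.prod_image (f := fun q => q) hinj.injOn]
    refine Finset.prod_primes_dvd d (fun q hq => ?_) (fun q hq => ?_) <;>
      obtain ⟨i, hi, rfl⟩ := Finset.mem_image.1 hq
    exacts [(hp i).prime, (Finset.mem_filter.1 hi).2]

variable [Fintype ι]

noncomputable def finsetEquivDivisorsProd (hp : ∀ i, (p i).Prime)
    (hinj : Function.Injective p) : Finset ι ≃ {d // d ∈ (∏ i, p i).divisors} where
  toFun S := ⟨∏ i ∈ S, p i, Nat.mem_divisors.2
    ⟨Finset.prod_dvd_prod_of_subset _ _ _ S.subset_univ,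
      Finset.prod_ne_zero_iff.2 fun i _ => (hp i).ne_zero⟩⟩
  invFun d := {i | p i ∣ d}
  left_inv S := by
    ext i
    simpa using prod_dvd_prod_iff_subset_of_prime hp hinj (S := {i}) (T := S)
  right_inv d :=
    Subtype.ext (eq_prod_filter_of_dvd_prod hp hinj (Nat.dvd_of_mem_divisors d.2)).symm

noncomputable def comparabilityIsoDivisorGraph (hp : ∀ i, (p i).Prime)
    (hinj : Function.Injective p) :
    comparability (Finset ι) ≃g divisorGraph (∏ i, p i) where
  toEquiv := finsetEquivDivisorsProd hp hinj
  map_rel_iff' {S T} := by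
    change _ ≠ _ ∧ _ ↔ _ ≠ _ ∧ _
    rw [(finsetEquivDivisorsProd hp hinj).injective.ne_iff]
    simp only [finsetEquivDivisorsProd, Equiv.coe_fn_mk,
      prod_dvd_prod_iff_subset_of_prime hp hinj]

end PrimeProducts

theorem Real.inv_sqrt_sq_mul {a : ℝ} (ha : 0 ≤ a) (b : ℝ) :
    (√(a ^ 2 * b))⁻¹ = √b / (a * b) := by
  rw [Real.sqrt_mul (sq_nonneg a), Real.sqrt_sq ha, div_mul_eq_div_div_swap,
    Real.sqrt_div_self', mul_inv]
  ring

theorem edgeDegreeProduct_comparability_finset_fin_four :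
    (comparability (Finset (Fin 4))).edgeFinset.val.map
        (comparability (Finset (Fin 4))).edgeDegreeProduct =
      Multiset.replicate 16 120 + Multiset.replicate 12 90 + Multiset.replicate 24 48 +
        Multiset.replicate 12 64 + {225} := by
  decide

theorem randicIndex_comparability_finset_fin_four :
    (comparability (Finset (Fin 4))).randicIndex =
      (47 + 60 * √3 + 12 * √10 + 8 * √30) / 30 := by
  rw [randicIndex_eq_sum_edgeDegreeProduct, Finset.sum_eq_multiset_sum]
  change (Multiset.map ((fun m : ℕ => (√(m : ℝ))⁻¹) ∘ edgeDegreeProduct _) _).sum = _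
  rw [← Multiset.map_map, edgeDegreeProduct_comparability_finset_fin_four]
  simp only [Multiset.map_add, Multiset.sum_add, Multiset.map_replicate, Multiset.sum_replicate,
    Multiset.map_singleton, Multiset.sum_singleton, nsmul_eq_mul]
  push_cast
  rw [show (120 : ℝ) = 2 ^ 2 * 30 by norm_num, show (90 : ℝ) = 3 ^ 2 * 10 by norm_num,
    show (48 : ℝ) = 4 ^ 2 * 3 by norm_num, show (64 : ℝ) = 8 ^ 2 * 1 by norm_num,
    show (225 : ℝ) = 15 ^ 2 * 1 by norm_num]
  rw [Real.inv_sqrt_sq_mul zero_le_two, Real.inv_sqrt_sq_mul zero_le_three,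
    Real.inv_sqrt_sq_mul zero_le_four, Real.inv_sqrt_sq_mul (by norm_num : (0 : ℝ) ≤ 8),
    Real.inv_sqrt_sq_mul (by norm_num : (0 : ℝ) ≤ 15), Real.sqrt_one]
  ring

/-- The Randić index of `Γ₄`: the sum over all edges of `1 / √(deg u · deg v)`. -/
theorem stmt_18 (p₁ p₂ p₃ p₄ : ℕ) (hp₁ : p₁.Prime) (hp₂ : p₂.Prime)
    (hp₃ : p₃.Prime) (hp₄ : p₄.Prime)
    (h12 : p₁ ≠ p₂) (h13 : p₁ ≠ p₃) (h14 : p₁ ≠ p₄)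
    (h23 : p₂ ≠ p₃) (h24 : p₂ ≠ p₄) (h34 : p₃ ≠ p₄)
    (n : ℕ) (hn : n = p₁ * p₂ * p₃ * p₄) :
    ∑ e ∈ (divisorGraph n).edgeFinset,
      Sym2.lift ⟨fun u v =>
          (1 : ℝ) / Real.sqrt (((divisorGraph n).degree u : ℝ) * ((divisorGraph n).degree v : ℝ)),
        fun u v => by beta_reduce; rw [mul_comm (((divisorGraph n).degree u : ℝ))]⟩ e =
      (47 + 60 * Real.sqrt 3 + 12 * Real.sqrt 10 + 8 * Real.sqrt 30) / 30 := by
  set p : Fin 4 → ℕ := ![p₁, p₂, p₃, p₄]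
  have hp : ∀ i, (p i).Prime := by
    intro i; fin_cases i <;> assumption
  have hinj : Function.Injective p := by
    intro i j h
    fin_cases i <;> fin_cases j <;> simp_all [p, eq_comm]
  obtain rfl : n = ∏ i, p i := by rw [hn, Fin.prod_univ_four]; rfl
  rw [← randicIndex_comparability_finset_fin_four,
    (comparabilityIsoDivisorGraph hp hinj).randicIndex_eq]
  rfl
end
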